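/- arXiv:1009.1262 — 2 statements merged into one kernel-verified Lean document; each statement's English description precedes it below -/
import Mathlib

section
/- Let s : ℝ → ℝ be a bijection and let u : ℝ² → ℝ be a C² function with mixed partial derivative ∂²u/∂x∂y = 0 at every point of ℝ² and with u(x, s(x)) = 0 for all x ∈ ℝ. Then for every (x₀, y₀) ∈ ℝ², u(x₀, y₀) = −u(s⁻¹(y₀), s(x₀)). -/
/-- Partial derivative with respect to the first variable. -/
noncomputable def pdx (u : ℝ × ℝ → ℝ) (p : ℝ × ℝ) : ℝ :=
  deriv (fun x : ℝ => u (x, p.2)) p.1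

/-- Partial derivative with respect to the second variable. -/
noncomputable def pdy (u : ℝ × ℝ → ℝ) (p : ℝ × ℝ) : ℝ :=
  deriv (fun y : ℝ => u (p.1, y)) p.2

/-
Integrating `u_{xy} = 0` first in `x` and then in `y` gives the rectangle rule
`u(x₀, a) + u(x₁, b) = u(x₀, b) + u(x₁, a)` for every characteristic rectangle.
Applied to the rectangle with corners `P = (x₀, y₀)`, `Q = (s⁻¹ y₀, s x₀)` and the two
points `(x₀, s x₀)`, `(s⁻¹ y₀, y₀)` of `Γ`, where `u` vanishes, it gives `u(P) + u(Q) = 0`.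
-/

section CharacteristicCoordinates

variable {u : ℝ × ℝ → ℝ}

lemma pdy_eq_fderiv {p : ℝ × ℝ} (hu : DifferentiableAt ℝ u p) :
    pdy u p = fderiv ℝ u p (0, 1) := by
  have hline : HasDerivAt (fun y : ℝ => ((p.1, y) : ℝ × ℝ)) ((0 : ℝ), (1 : ℝ)) p.2 :=
    (hasDerivAt_const p.2 p.1).prodMk (hasDerivAt_id p.2)
  exact (hu.hasFDerivAt.comp_hasDerivAt p.2 hline).deriv

lemma differentiable_pdy (hu : ContDiff ℝ 2 u) : Differentiable ℝ (pdy u) := by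
  have hfderiv : Differentiable ℝ (fderiv ℝ u) :=
    (hu.fderiv_right (m := 1) (by norm_num)).differentiable one_ne_zero
  rw [show pdy u = fun p => fderiv ℝ u p (0, 1) from
    funext fun p => pdy_eq_fderiv (hu.differentiable (by norm_num) p)]
  fun_prop

lemma pdy_eq_of_pdx_pdy_eq_zero (hd : Differentiable ℝ (pdy u))
    (hwave : ∀ p : ℝ × ℝ, pdx (pdy u) p = 0) (x₀ x₁ y : ℝ) :
    pdy u (x₀, y) = pdy u (x₁, y) :=
  is_const_of_deriv_eq_zero (f := fun x => pdy u (x, y))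
    (fun x => (hd.comp (differentiable_id.prodMk (differentiable_const y))) x)
    (fun x => hwave (x, y)) x₀ x₁

lemma sub_eq_of_pdy_eq (hu : Differentiable ℝ u) {x₀ x₁ : ℝ}
    (h : ∀ y, pdy u (x₀, y) = pdy u (x₁, y)) (a b : ℝ) :
    u (x₀, a) - u (x₁, a) = u (x₀, b) - u (x₁, b) := by
  have hvert : ∀ x y : ℝ, HasDerivAt (fun t => u (x, t)) (pdy u (x, y)) y := fun x y =>
    ((hu.comp ((differentiable_const x).prodMk differentiable_id)) y).hasDerivAt
  have hdiff : ∀ y, HasDerivAt (fun t => u (x₀, t) - u (x₁, t)) 0 y := fun y => by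
    have hsub := (hvert x₀ y).sub (hvert x₁ y)
    rwa [h y, sub_self] at hsub
  exact is_const_of_deriv_eq_zero (fun y => (hdiff y).differentiableAt)
    (fun y => (hdiff y).deriv) a b

theorem add_add_eq_of_pdx_pdy_eq_zero (hu : ContDiff ℝ 2 u)
    (hwave : ∀ p : ℝ × ℝ, pdx (pdy u) p = 0) (x₀ x₁ a b : ℝ) :
    u (x₀, a) + u (x₁, b) = u (x₀, b) + u (x₁, a) := by
  have h := sub_eq_of_pdy_eq (hu.differentiable (by norm_num))
    (pdy_eq_of_pdx_pdy_eq_zero (differentiable_pdy hu) hwave x₀ x₁) a b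
  linarith

end CharacteristicCoordinates

/-- Point-to-point reflection law for the wave equation in characteristic coordinates
(`u_{xy} = 0`) with Dirichlet condition on the curve `Γ = {(x, s(x))}`. -/
theorem wave_point_to_point_reflection
    (s : ℝ → ℝ) (hsbij : Function.Bijective s)
    (u : ℝ × ℝ → ℝ) (hu : ContDiff ℝ 2 u)
    (hwave : ∀ p : ℝ × ℝ, pdx (pdy u) p = 0)
    (huΓ : ∀ x : ℝ, u (x, s x) = 0) :
    ∀ x₀ y₀ : ℝ, u (x₀, y₀) = -u (Function.invFun s y₀, s x₀) := by
  intro x₀ y₀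
  set x₁ := Function.invFun s y₀
  have hx₁ : s x₁ = y₀ := Function.invFun_eq (hsbij.2 y₀)
  have hrect := add_add_eq_of_pdx_pdy_eq_zero hu hwave x₀ x₁ y₀ (s x₀)
  rw [huΓ x₀, ← hx₁, huΓ x₁] at hrect
  rw [← hx₁]
  linarith
end

section
/- Let a, b ∈ ℝ and let u : ℝ² \ {(0,0)} → ℝ be a C² solution of Δu + a uₓ + b u_y + ((a² + b²)/4) u = 0 on ℝ² \ {(0,0)} with u(x, y) = 0 whenever x² + y² = 1. Then for every (x₀, y₀) ≠ (0, 0), u(x₀, y₀) = −exp((a x₀ + b y₀)(1 − x₀² − y₀²)/(2(x₀² + y₀²))) · u(x₀/(x₀² + y₀²), y₀/(x₀² + y₀²)). -/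
open Complex ComplexConjugate Filter Topology InnerProductSpace Laplacian

section PartialDerivatives

variable {u v : ℝ × ℝ → ℝ} {p : ℝ × ℝ}

lemma hasDerivAt_pdx (h : DifferentiableAt ℝ u p) :
    HasDerivAt (fun x => u (x, p.2)) (pdx u p) p.1 :=
  (h.comp p.1 (by fun_prop : DifferentiableAt ℝ (fun x : ℝ => (x, p.2)) p.1)).hasDerivAt

lemma pdx_eq_fderiv (h : DifferentiableAt ℝ u p) : pdx u p = fderiv ℝ u p (1, 0) := by
  have hline : HasDerivAt (fun x : ℝ => (x, p.2)) ((1 : ℝ), (0 : ℝ)) p.1 :=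
    (hasDerivAt_id p.1).prodMk (hasDerivAt_const p.1 p.2)
  exact (h.hasFDerivAt.comp_hasDerivAt p.1 hline).deriv

lemma pdx_congr (h : u =ᶠ[𝓝 p] v) : pdx u p = pdx v p :=
  (h.comp_tendsto ((by fun_prop : Continuous fun x : ℝ => (x, p.2)).tendsto p.1)).deriv_eq

lemma differentiableAt_pdx (h : ContDiffAt ℝ 2 u p) : DifferentiableAt ℝ (pdx u) p := by
  have hD : DifferentiableAt ℝ (fderiv ℝ u) p :=
    (h.fderiv_right (m := 1) (by norm_num)).differentiableAt (by norm_num)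
  refine (hD.clm_apply (differentiableAt_const ((1 : ℝ), (0 : ℝ)))).congr_of_eventuallyEq ?_
  exact (h.eventually (by simp)).mono fun q hq => pdx_eq_fderiv (hq.differentiableAt (by simp))

lemma pdy_pdy_eq_pdx_pdx_comp_swap : pdy (pdy u) p = pdx (pdx (u ∘ Prod.swap)) p.swap := rfl

variable (α β : ℝ)

lemma pdx_exp_mul (h : DifferentiableAt ℝ u p) :
    pdx (fun q => Real.exp (α * q.1 + β * q.2) * u q) p =
      Real.exp (α * p.1 + β * p.2) * (α * u p + pdx u p) := by
  have hexp : HasDerivAt (fun x : ℝ => Real.exp (α * x + β * p.2))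
      (Real.exp (α * p.1 + β * p.2) * α) p.1 := by
    simpa using (((hasDerivAt_id p.1).const_mul α).add_const (β * p.2)).exp
  exact (hexp.mul (hasDerivAt_pdx h)).deriv.trans (by ring)

lemma pdx_pdx_exp_mul (h : ContDiffAt ℝ 2 u p) :
    pdx (pdx (fun q => Real.exp (α * q.1 + β * q.2) * u q)) p =
      Real.exp (α * p.1 + β * p.2) * (pdx (pdx u) p + 2 * α * pdx u p + α ^ 2 * u p) := by
  have hu : DifferentiableAt ℝ u p := h.differentiableAt (by simp)
  have hpu := differentiableAt_pdx h
  have hfirst : pdx (fun q => Real.exp (α * q.1 + β * q.2) * u q) =ᶠ[𝓝 p]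
      fun q => Real.exp (α * q.1 + β * q.2) * (α * u q + pdx u q) :=
    (h.eventually (by simp)).mono fun q hq => pdx_exp_mul α β (hq.differentiableAt (by simp))
  have hlin : pdx (fun q => α * u q + pdx u q) p = α * pdx u p + pdx (pdx u) p :=
    (((hasDerivAt_pdx hu).const_mul α).add (hasDerivAt_pdx hpu)).deriv
  rw [pdx_congr hfirst, pdx_exp_mul α β (by fun_prop), hlin]
  ring

lemma pdy_pdy_exp_mul (h : ContDiffAt ℝ 2 u p) :
    pdy (pdy (fun q => Real.exp (α * q.1 + β * q.2) * u q)) p =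
      Real.exp (α * p.1 + β * p.2) * (pdy (pdy u) p + 2 * β * pdy u p + β ^ 2 * u p) := by
  have hswap : ContDiffAt ℝ 2 (u ∘ Prod.swap) p.swap :=
    h.comp p.swap (contDiff_snd.prodMk contDiff_fst).contDiffAt
  have hcomm : (fun q : ℝ × ℝ => Real.exp (α * q.1 + β * q.2) * u q) ∘ Prod.swap =
      fun q => Real.exp (β * q.1 + α * q.2) * (u ∘ Prod.swap) q := by
    ext q; simp [add_comm]
  rw [pdy_pdy_eq_pdx_pdx_comp_swap, hcomm, pdx_pdx_exp_mul β α hswap]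
  simp only [Prod.fst_swap, Prod.snd_swap, add_comm (β * p.2)]
  rfl

end PartialDerivatives

section LineDerivatives

variable {E F : Type*} [NormedAddCommGroup E] [NormedSpace ℝ E] [NormedAddCommGroup F]
  [NormedSpace ℝ F] {f : E → F} {c v : E} {t : ℝ}

lemma deriv_comp_line (h : DifferentiableAt ℝ f (c + t • v)) :
    deriv (fun s : ℝ => f (c + s • v)) t = fderiv ℝ f (c + t • v) v := by
  have hline : HasDerivAt (fun s : ℝ => c + s • v) v t := by
    simpa using ((hasDerivAt_id t).smul_const v).const_add c
  exact (h.hasFDerivAt.comp_hasDerivAt t hline).deriv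

lemma deriv_deriv_comp_line (h : ContDiffAt ℝ 2 f (c + t • v)) :
    deriv (fun s : ℝ => deriv (fun r : ℝ => f (c + r • v)) s) t =
      fderiv ℝ (fderiv ℝ f) (c + t • v) v v := by
  have hline : Continuous fun s : ℝ => c + s • v := by fun_prop
  have hfirst : (fun s => deriv (fun r : ℝ => f (c + r • v)) s) =ᶠ[𝓝 t]
      fun s => fderiv ℝ f (c + s • v) v :=
    (hline.continuousAt.eventually (h.eventually (by simp))).mono fun s hs =>
      deriv_comp_line (hs.differentiableAt (by simp))
  have hD : DifferentiableAt ℝ (fderiv ℝ f) (c + t • v) :=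
    (h.fderiv_right (m := 1) (by norm_num)).differentiableAt (by norm_num)
  rw [hfirst.deriv_eq, deriv_comp_line (f := fun x => fderiv ℝ f x v)
    (hD.clm_apply (differentiableAt_const v)), fderiv_clm_apply hD (differentiableAt_const v)]
  simp

end LineDerivatives

lemma laplacian_eq_pdx_pdx_add_pdy_pdy {w : ℝ × ℝ → ℝ} {z : ℂ}
    (h : ContDiffAt ℝ 2 (fun z : ℂ => w (z.re, z.im)) z) :
    Δ (fun z : ℂ => w (z.re, z.im)) z = pdx (pdx w) (z.re, z.im) + pdy (pdy w) (z.re, z.im) := by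
  have hx : (z.im * I : ℂ) + z.re • (1 : ℂ) = z := by simp [Complex.ext_iff]
  have hy : (z.re : ℂ) + z.im • I = z := by simp
  have hxx : pdx (pdx w) (z.re, z.im) = fderiv ℝ (fderiv ℝ fun z : ℂ => w (z.re, z.im)) z 1 1 := by
    have := deriv_deriv_comp_line (c := (z.im * I : ℂ)) (v := 1) (by rwa [hx])
    rw [hx] at this
    simp only [real_smul, mul_one, add_re, mul_re, ofReal_re, I_re, mul_zero, ofReal_im, I_im,
      sub_self, zero_add, add_im, mul_im, add_zero] at this
    exact this
  have hyy : pdy (pdy w) (z.re, z.im) = fderiv ℝ (fderiv ℝ fun z : ℂ => w (z.re, z.im)) z I I := by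
    have := deriv_deriv_comp_line (c := (z.re : ℂ)) (v := I) (by rwa [hy])
    rw [hy] at this
    simp only [real_smul, add_re, ofReal_re, mul_re, I_re, mul_zero, ofReal_im, I_im, mul_one,
      sub_self, add_zero, add_im, mul_im, zero_add] at this
    exact this
  simp only [laplacian_eq_iteratedFDeriv_complexPlane, iteratedFDeriv_two_apply, hxx, hyy]
  rfl

theorem harmonicOnNhd_exp_mul_of_pde {a b : ℝ} {u : ℝ × ℝ → ℝ} {s : Set (ℝ × ℝ)}
    (hs : IsOpen s) (hu : ContDiffOn ℝ 2 u s)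
    (hueq : ∀ p ∈ s, pdx (pdx u) p + pdy (pdy u) p + a * pdx u p + b * pdy u p
      + ((a ^ 2 + b ^ 2) / 4) * u p = 0) :
    HarmonicOnNhd (fun z : ℂ => Real.exp (a / 2 * z.re + b / 2 * z.im) * u (z.re, z.im))
      {z : ℂ | (z.re, z.im) ∈ s} := by
  set w : ℝ × ℝ → ℝ := fun q => Real.exp (a / 2 * q.1 + b / 2 * q.2) * u q
  have hopen : IsOpen {z : ℂ | (z.re, z.im) ∈ s} := hs.preimage (by fun_prop)
  have hw : ContDiffOn ℝ 2 (fun z : ℂ => w (z.re, z.im)) {z : ℂ | (z.re, z.im) ∈ s} :=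
    (Real.contDiff_exp.comp ((reCLM.contDiff.const_smul (a / 2)).add
      (imCLM.contDiff.const_smul (b / 2)))).contDiffOn.mul
      (hu.comp (reCLM.contDiff.prodMk imCLM.contDiff).contDiffOn fun z hz => hz)
  intro z hz
  refine ⟨hw.contDiffAt (hopen.mem_nhds hz), ?_⟩
  filter_upwards [hopen.mem_nhds hz] with z' hz'
  have hup : ContDiffAt ℝ 2 u (z'.re, z'.im) := hu.contDiffAt (hs.mem_nhds hz')
  rw [laplacian_eq_pdx_pdx_add_pdy_pdy (hw.contDiffAt (hopen.mem_nhds hz')),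
    pdx_pdx_exp_mul _ _ hup, pdy_pdy_exp_mul _ _ hup, Pi.zero_apply]
  linear_combination Real.exp (a / 2 * z'.re + b / 2 * z'.im) * hueq _ hz'

/-- `2 ∂f/∂z`, in the form of `HarmonicAt.differentiableAt_complex_partial`. -/
noncomputable def complexPartial (f : ℂ → ℝ) (z : ℂ) : ℂ := fderiv ℝ f z 1 - I * fderiv ℝ f z I

lemma re_complexPartial_mul (f : ℂ → ℝ) (z v : ℂ) :
    (complexPartial f z * v).re = fderiv ℝ f z v := by
  have hv : v = v.re • (1 : ℂ) + v.im • I := by simp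
  conv_rhs => rw [hv, map_add, map_smul, map_smul]
  simp only [complexPartial, mul_re, sub_re, ofReal_re, I_re, zero_mul, I_im, ofReal_im, mul_zero,
    sub_self, sub_zero, sub_im, mul_im, one_mul, zero_add, zero_sub, neg_mul, sub_neg_eq_add,
    smul_eq_mul]
  ring

lemma im_mul_complexPartial_eq_zero {f : ℂ → ℝ} {z : ℂ} (hf : DifferentiableAt ℝ f z)
    (hz : ‖z‖ = 1) (hcirc : ∀ w : ℂ, ‖w‖ = 1 → f w = 0) : (z * complexPartial f z).im = 0 := by
  have hrot : HasDerivAt (fun θ : ℝ => z * exp (θ * I)) (z * I) 0 := by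
    simpa using ((hasDerivAt_id (0 : ℝ)).ofReal_comp.mul_const I).cexp.const_mul z
  have hconst : (f ∘ fun θ : ℝ => z * exp (θ * I)) = fun _ => 0 := by
    ext θ; exact hcirc _ (by simp [hz])
  have htangent : fderiv ℝ f z (z * I) = 0 := by
    have := hf.hasFDerivAt.comp_hasDerivAt_of_eq 0 hrot (by simp)
    rw [hconst] at this
    exact this.unique (hasDerivAt_const 0 0)
  rw [← re_complexPartial_mul] at htangent
  simp only [mul_re, mul_im, I_re, I_im] at htangent ⊢
  linarith

lemma hasFDerivAt_conj_inv {z : ℂ} (hz : z ≠ 0) :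
    HasFDerivAt (fun w : ℂ => conj w⁻¹)
      ((conjCLE : ℂ ≃L[ℝ] ℂ).toContinuousLinearMap.comp
        ((ContinuousLinearMap.toSpanSingleton ℂ (-(z ^ 2)⁻¹)).restrictScalars ℝ)) z :=
  conjCLE.hasFDerivAt.comp z ((hasDerivAt_inv hz).hasFDerivAt.restrictScalars ℝ)

lemma complexPartial_eq_of_fderiv_apply {f : ℂ → ℝ} {z k : ℂ}
    (h : ∀ v, fderiv ℝ f z v = (k * v).re) : complexPartial f z = k := by
  simp only [complexPartial, h]
  apply Complex.ext <;> simp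

lemma complexPartial_add_comp_conj_inv {f : ℂ → ℝ} {z : ℂ} (hz : z ≠ 0)
    (hf : DifferentiableAt ℝ f z) (hf' : DifferentiableAt ℝ f (conj z⁻¹)) :
    complexPartial (fun w => f w + f (conj w⁻¹)) z =
      complexPartial f z - conj (complexPartial f (conj z⁻¹)) / z ^ 2 := by
  have hsum : HasFDerivAt (fun w => f w + f (conj w⁻¹)) _ z :=
    hf.hasFDerivAt.add (hf'.hasFDerivAt.comp z (hasFDerivAt_conj_inv hz))
  refine complexPartial_eq_of_fderiv_apply fun v => ?_
  simp only [hsum.fderiv, add_apply, ContinuousLinearMap.comp_apply,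
    ContinuousLinearMap.coe_restrictScalars', ContinuousLinearMap.toSpanSingleton_apply,
    ContinuousLinearEquiv.coe_coe, conjCLE_apply, ← re_complexPartial_mul]
  have hreflect : (complexPartial f (conj z⁻¹) * conj (v • -(z ^ 2)⁻¹)).re =
      (-conj (complexPartial f (conj z⁻¹)) / z ^ 2 * v).re := by
    rw [← conj_re, map_mul, conj_conj]
    congr 1
    simp only [smul_eq_mul]
    ring
  rw [hreflect, ← add_re]
  congr 1
  ring

lemma re_conj_inv (z : ℂ) : (conj z⁻¹).re = z.re / (z.re ^ 2 + z.im ^ 2) := by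
  simp [inv_re, normSq_apply, sq]

lemma im_conj_inv (z : ℂ) : (conj z⁻¹).im = z.im / (z.re ^ 2 + z.im ^ 2) := by
  simp [inv_im, normSq_apply, sq]

lemma isPreconnected_compl_zero : IsPreconnected ({0}ᶜ : Set ℂ) :=
  (isConnected_compl_singleton_of_one_lt_rank (by simp [rank_real_complex]) 0).isPreconnected

lemma frequently_norm_eq_one_nhdsNE_one : ∃ᶠ w in 𝓝[≠] (1 : ℂ), ‖w‖ = 1 := by
  have hcurve : HasDerivAt (fun θ : ℝ => exp (θ * I)) I 0 := by
    simpa using ((hasDerivAt_id (0 : ℝ)).ofReal_comp.mul_const I).cexp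
  have := hcurve.tendsto_nhdsNE I_ne_zero
  simp only [ofReal_zero, zero_mul, exp_zero] at this
  exact this.frequently (Frequently.of_forall norm_exp_ofReal_mul_I)

lemma eqOn_zero_of_eq_zero_of_norm_eq_one {G : ℂ → ℂ} (hG : DifferentiableOn ℂ G {0}ᶜ)
    (hcirc : ∀ z : ℂ, ‖z‖ = 1 → G z = 0) : Set.EqOn G 0 {0}ᶜ :=
  (hG.analyticOnNhd isOpen_compl_singleton).eqOn_zero_of_preconnected_of_frequently_eq_zero
    isPreconnected_compl_zero (by simp) (frequently_norm_eq_one_nhdsNE_one.mono hcirc)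

namespace InnerProductSpace.HarmonicOnNhd

variable {f : ℂ → ℝ}

lemma differentiableAt_of_ne_zero (hf : HarmonicOnNhd f {0}ᶜ) {z : ℂ} (hz : z ≠ 0) :
    DifferentiableAt ℝ f z :=
  (hf z hz).1.differentiableAt (by simp)

lemma complexPartial_sub_conj_div_sq_eq_zero (hf : HarmonicOnNhd f {0}ᶜ)
    (hcirc : ∀ z : ℂ, ‖z‖ = 1 → f z = 0) {z : ℂ} (hz : z ≠ 0) :
    complexPartial f z - conj (complexPartial f (conj z⁻¹)) / z ^ 2 = 0 := by
  have hg (w : ℂ) (hw : w ≠ 0) : DifferentiableAt ℂ (complexPartial f) w :=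
    HarmonicAt.differentiableAt_complex_partial (hf w hw)
  have hholo : DifferentiableOn ℂ
      (fun w => complexPartial f w - conj (complexPartial f (conj w⁻¹)) / w ^ 2) {0}ᶜ := by
    intro w (hw : w ≠ 0)
    have hreflected := (hg _ (by simpa using hw : conj w⁻¹ ≠ 0)).conj_conj
    rw [conj_conj] at hreflected
    have hcomp := hreflected.comp w (differentiableAt_inv hw)
    simp only [Function.comp_def] at hcomp
    exact ((hg w hw).sub (hcomp.div (differentiableAt_pow 2)
      (pow_ne_zero 2 hw))).differentiableWithinAt
  refine eqOn_zero_of_eq_zero_of_norm_eq_one hholo (fun w hw => ?_) hz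
  have hw0 : w ≠ 0 := by rintro rfl; simp at hw
  have hconj : conj w = w⁻¹ := (inv_eq_conj hw).symm
  have hreal : conj (w * complexPartial f w) = w * complexPartial f w :=
    conj_eq_iff_im.2 (im_mul_complexPartial_eq_zero (hf.differentiableAt_of_ne_zero hw0) hw hcirc)
  rw [map_mul, hconj, inv_mul_eq_iff_eq_mul₀ hw0] at hreal
  simp only [map_inv₀, hconj, inv_inv]
  field_simp
  linear_combination -hreal

theorem apply_conj_inv_eq_neg (hf : HarmonicOnNhd f {0}ᶜ)
    (hcirc : ∀ z : ℂ, ‖z‖ = 1 → f z = 0) {z : ℂ} (hz : z ≠ 0) : f (conj z⁻¹) = -f z := by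
  have hι (w : ℂ) (hw : w ≠ 0) : conj w⁻¹ ≠ 0 := by simpa using hw
  set V : ℂ → ℝ := fun w => f w + f (conj w⁻¹)
  have hVdiff : DifferentiableOn ℝ V {0}ᶜ := fun w (hw : w ≠ 0) =>
    ((hf.differentiableAt_of_ne_zero hw).add ((hf.differentiableAt_of_ne_zero (hι w hw)).comp w
      (hasFDerivAt_conj_inv hw).differentiableAt)).differentiableWithinAt
  have hVflat : Set.EqOn (fderiv ℝ V) 0 {0}ᶜ := by
    intro w (hw : w ≠ 0)
    ext v
    rw [← re_complexPartial_mul, complexPartial_add_comp_conj_inv hw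
      (hf.differentiableAt_of_ne_zero hw) (hf.differentiableAt_of_ne_zero (hι w hw)),
      complexPartial_sub_conj_div_sq_eq_zero hf hcirc hw]
    simp
  have hV := isOpen_compl_singleton.is_const_of_fderiv_eq_zero isPreconnected_compl_zero hVdiff
    hVflat hz (one_ne_zero : (1 : ℂ) ≠ 0)
  have hV1 : V 1 = 0 := by simp [V, hcirc 1 (by simp)]
  simp only [V, hV1] at hV
  linarith

end InnerProductSpace.HarmonicOnNhd

/-- The paper's example of Theorem 5.3 for the unit circle: point-to-point reflection
under inversion for solutions of `Δu + a uₓ + b u_y + ((a²+b²)/4) u = 0` vanishing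
on the unit circle. -/
theorem reflection_across_unit_circle
    (a b : ℝ)
    (u : ℝ × ℝ → ℝ) (hu : ContDiffOn ℝ 2 u {p : ℝ × ℝ | p ≠ (0, 0)})
    (hueq : ∀ p : ℝ × ℝ, p ≠ (0, 0) →
      pdx (pdx u) p + pdy (pdy u) p + a * pdx u p + b * pdy u p
        + ((a ^ 2 + b ^ 2) / 4) * u p = 0)
    (huΓ : ∀ x y : ℝ, x ^ 2 + y ^ 2 = 1 → u (x, y) = 0) :
    ∀ x₀ y₀ : ℝ, (x₀, y₀) ≠ ((0 : ℝ), (0 : ℝ)) →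
      u (x₀, y₀) =
        -Real.exp ((a * x₀ + b * y₀) * (1 - x₀ ^ 2 - y₀ ^ 2) / (2 * (x₀ ^ 2 + y₀ ^ 2))) *
          u (x₀ / (x₀ ^ 2 + y₀ ^ 2), y₀ / (x₀ ^ 2 + y₀ ^ 2)) := by
  intro x₀ y₀ hp
  have hharm := (harmonicOnNhd_exp_mul_of_pde isOpen_ne hu hueq).mono fun z (hz : z ≠ 0) =>
    show (z.re, z.im) ≠ (0, 0) by simpa [Prod.ext_iff, Complex.ext_iff] using hz
  have hcirc (z : ℂ) (hz : ‖z‖ = 1) :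
      Real.exp (a / 2 * z.re + b / 2 * z.im) * u (z.re, z.im) = 0 := by
    rw [huΓ _ _ (by rw [← one_pow 2, ← hz, Complex.sq_norm, normSq_apply]; ring), mul_zero]
  have hz : (x₀ + y₀ * I : ℂ) ≠ 0 := by simpa [Complex.ext_iff, Prod.ext_iff] using hp
  have hr : x₀ ^ 2 + y₀ ^ 2 ≠ 0 := by simpa [normSq_apply, sq] using (normSq_pos.2 hz).ne'
  have hexp : Real.exp (a / 2 * (x₀ / (x₀ ^ 2 + y₀ ^ 2)) + b / 2 * (y₀ / (x₀ ^ 2 + y₀ ^ 2))) =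
      Real.exp (a / 2 * x₀ + b / 2 * y₀) *
        Real.exp ((a * x₀ + b * y₀) * (1 - x₀ ^ 2 - y₀ ^ 2) / (2 * (x₀ ^ 2 + y₀ ^ 2))) := by
    rw [← Real.exp_add]
    congr 1
    field_simp
    ring
  have key := hharm.apply_conj_inv_eq_neg hcirc hz
  simp only [re_conj_inv, im_conj_inv, add_re, add_im, ofReal_re, ofReal_im, mul_re, mul_im, I_re,
    I_im, mul_zero, mul_one, sub_zero, add_zero, zero_add, hexp] at key
  apply mul_left_cancel₀ (Real.exp_ne_zero (a / 2 * x₀ + b / 2 * y₀))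
  linear_combination key
end
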